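/- arXiv:math/9804162 — 2 statements merged into one kernel-verified Lean document; each statement's English description precedes it below -/
import Mathlib

section
/- Let φ : ℝ³ → ℝ be a smooth nowhere-zero function of (x, y, t), and set u = 2 φ_x/φ and h = -2 φ_x φ_y/φ² + 2 φ_xy/φ - 1. Then, with ψ := φ_t + φ_xx, the following identity holds pointwise: h_t + (u h + u + u_xy)_x = (4/φ³) φ_x φ_y ψ - (2/φ²)(φ_x ψ_y + φ_y ψ_x + φ_xy ψ) + (2/φ) ψ_xy. -/
noncomputable def pdx (f : ℝ → ℝ → ℝ → ℝ) : ℝ → ℝ → ℝ → ℝ :=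
  fun x y t => deriv (fun x' => f x' y t) x

noncomputable def pdy (f : ℝ → ℝ → ℝ → ℝ) : ℝ → ℝ → ℝ → ℝ :=
  fun x y t => deriv (fun y' => f x y' t) y

noncomputable def pdt (f : ℝ → ℝ → ℝ → ℝ) : ℝ → ℝ → ℝ → ℝ :=
  fun x y t => deriv (fun t' => f x y t') t

/-! ### Auxiliary smoothness framework -/

def Sm (f : ℝ → ℝ → ℝ → ℝ) : Prop :=
  ContDiff ℝ (⊤ : ℕ∞) (fun p : ℝ × ℝ × ℝ => f p.1 p.2.1 p.2.2)

namespace Sm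

variable {f g : ℝ → ℝ → ℝ → ℝ}

protected lemma add (hf : Sm f) (hg : Sm g) :
    Sm (fun x y t => f x y t + g x y t) := ContDiff.add hf hg

protected lemma mul (hf : Sm f) (hg : Sm g) :
    Sm (fun x y t => f x y t * g x y t) := ContDiff.mul hf hg

protected lemma div (hf : Sm f) (hg : Sm g) (h0 : ∀ x y t, g x y t ≠ 0) :
    Sm (fun x y t => f x y t / g x y t) :=
  ContDiff.div hf hg (fun p => h0 p.1 p.2.1 p.2.2)

lemma diffX (hf : Sm f) (y t : ℝ) : Differentiable ℝ (fun x' => f x' y t) :=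
  (hf.differentiable (by simp)).comp (differentiable_id.prodMk (differentiable_const (y, t)))

lemma diffY (hf : Sm f) (x t : ℝ) : Differentiable ℝ (fun y' => f x y' t) :=
  (hf.differentiable (by simp)).comp
    ((differentiable_const x).prodMk (differentiable_id.prodMk (differentiable_const t)))

lemma diffT (hf : Sm f) (x y : ℝ) : Differentiable ℝ (fun t' => f x y t') :=
  (hf.differentiable (by simp)).comp
    ((differentiable_const x).prodMk ((differentiable_const y).prodMk differentiable_id))

lemma hasX (hf : Sm f) (x y t : ℝ) :
    HasDerivAt (fun x' => f x' y t) (pdx f x y t) x :=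
  ((hf.diffX y t) x).hasDerivAt

lemma hasY (hf : Sm f) (x y t : ℝ) :
    HasDerivAt (fun y' => f x y' t) (pdy f x y t) y :=
  ((hf.diffY x t) y).hasDerivAt

lemma hasT (hf : Sm f) (x y t : ℝ) :
    HasDerivAt (fun t' => f x y t') (pdt f x y t) t :=
  ((hf.diffT x y) t).hasDerivAt

lemma pdx_eq (hf : Sm f) (x y t : ℝ) :
    pdx f x y t
      = fderiv ℝ (fun p : ℝ × ℝ × ℝ => f p.1 p.2.1 p.2.2) (x, y, t) (1, 0, 0) := by
  have hl : HasDerivAt (fun x' : ℝ => ((x', y, t) : ℝ × ℝ × ℝ)) (1, 0, 0) x :=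
    (hasDerivAt_id x).prodMk (hasDerivAt_const x (y, t))
  have hF := (hf.differentiable (by simp) (x, y, t)).hasFDerivAt
  exact (hF.comp_hasDerivAt x hl).deriv

lemma pdy_eq (hf : Sm f) (x y t : ℝ) :
    pdy f x y t
      = fderiv ℝ (fun p : ℝ × ℝ × ℝ => f p.1 p.2.1 p.2.2) (x, y, t) (0, 1, 0) := by
  have hl : HasDerivAt (fun y' : ℝ => ((x, y', t) : ℝ × ℝ × ℝ)) (0, 1, 0) y :=
    (hasDerivAt_const y x).prodMk ((hasDerivAt_id y).prodMk (hasDerivAt_const y t))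
  have hF := (hf.differentiable (by simp) (x, y, t)).hasFDerivAt
  exact (hF.comp_hasDerivAt y hl).deriv

lemma pdt_eq (hf : Sm f) (x y t : ℝ) :
    pdt f x y t
      = fderiv ℝ (fun p : ℝ × ℝ × ℝ => f p.1 p.2.1 p.2.2) (x, y, t) (0, 0, 1) := by
  have hl : HasDerivAt (fun t' : ℝ => ((x, y, t') : ℝ × ℝ × ℝ)) (0, 0, 1) t :=
    (hasDerivAt_const t x).prodMk ((hasDerivAt_const t y).prodMk (hasDerivAt_id t))
  have hF := (hf.differentiable (by simp) (x, y, t)).hasFDerivAt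
  exact (hF.comp_hasDerivAt t hl).deriv

protected lemma pdx (hf : Sm f) : Sm (_root_.pdx f) := by
  have h : (fun p : ℝ × ℝ × ℝ => _root_.pdx f p.1 p.2.1 p.2.2)
      = fun p => fderiv ℝ (fun q : ℝ × ℝ × ℝ => f q.1 q.2.1 q.2.2) p (1, 0, 0) :=
    funext fun p => hf.pdx_eq p.1 p.2.1 p.2.2
  unfold Sm
  rw [h]
  exact (hf.fderiv_right (by simp)).clm_apply contDiff_const

protected lemma pdy (hf : Sm f) : Sm (_root_.pdy f) := by
  have h : (fun p : ℝ × ℝ × ℝ => _root_.pdy f p.1 p.2.1 p.2.2)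
      = fun p => fderiv ℝ (fun q : ℝ × ℝ × ℝ => f q.1 q.2.1 q.2.2) p (0, 1, 0) :=
    funext fun p => hf.pdy_eq p.1 p.2.1 p.2.2
  unfold Sm
  rw [h]
  exact (hf.fderiv_right (by simp)).clm_apply contDiff_const

protected lemma pdt (hf : Sm f) : Sm (_root_.pdt f) := by
  have h : (fun p : ℝ × ℝ × ℝ => _root_.pdt f p.1 p.2.1 p.2.2)
      = fun p => fderiv ℝ (fun q : ℝ × ℝ × ℝ => f q.1 q.2.1 q.2.2) p (0, 0, 1) :=
    funext fun p => hf.pdt_eq p.1 p.2.1 p.2.2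
  unfold Sm
  rw [h]
  exact (hf.fderiv_right (by simp)).clm_apply contDiff_const

end Sm

lemma fderiv_swap (F : ℝ × ℝ × ℝ → ℝ) (hF : ContDiff ℝ (⊤ : ℕ∞) F) (p v w : ℝ × ℝ × ℝ) :
    fderiv ℝ (fun q => fderiv ℝ F q v) p w = fderiv ℝ (fun q => fderiv ℝ F q w) p v := by
  have hd : DifferentiableAt ℝ (fderiv ℝ F) p :=
    ((hF.fderiv_right (m := (⊤ : ℕ∞)) (by simp)).differentiable (by simp)) p
  have hs : IsSymmSndFDerivAt ℝ F p := hF.contDiffAt.isSymmSndFDerivAt (by rw [minSmoothness_of_isRCLikeNormedField]; exact WithTop.coe_le_coe.mpr le_top)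
  rw [fderiv_clm_apply hd (differentiableAt_const v),
    fderiv_clm_apply hd (differentiableAt_const w)]
  simp only [fderiv_fun_const, fderiv_const_apply, Pi.zero_apply, ContinuousLinearMap.comp_zero, zero_add,
    ContinuousLinearMap.add_apply, ContinuousLinearMap.flip_apply]
  exact hs w v

lemma pdx_pdy_comm {f : ℝ → ℝ → ℝ → ℝ} (hf : Sm f) : pdy (pdx f) = pdx (pdy f) := by
  funext x y t
  have e1 : (fun p : ℝ × ℝ × ℝ => pdx f p.1 p.2.1 p.2.2)
      = fun p => fderiv ℝ (fun q : ℝ × ℝ × ℝ => f q.1 q.2.1 q.2.2) p (1, 0, 0) :=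
    funext fun p => hf.pdx_eq p.1 p.2.1 p.2.2
  have e2 : (fun p : ℝ × ℝ × ℝ => pdy f p.1 p.2.1 p.2.2)
      = fun p => fderiv ℝ (fun q : ℝ × ℝ × ℝ => f q.1 q.2.1 q.2.2) p (0, 1, 0) :=
    funext fun p => hf.pdy_eq p.1 p.2.1 p.2.2
  rw [hf.pdx.pdy_eq x y t, hf.pdy.pdx_eq x y t, e1, e2]
  exact fderiv_swap _ hf _ _ _

lemma pdt_pdx_comm {f : ℝ → ℝ → ℝ → ℝ} (hf : Sm f) : pdt (pdx f) = pdx (pdt f) := by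
  funext x y t
  have e1 : (fun p : ℝ × ℝ × ℝ => pdx f p.1 p.2.1 p.2.2)
      = fun p => fderiv ℝ (fun q : ℝ × ℝ × ℝ => f q.1 q.2.1 q.2.2) p (1, 0, 0) :=
    funext fun p => hf.pdx_eq p.1 p.2.1 p.2.2
  have e2 : (fun p : ℝ × ℝ × ℝ => pdt f p.1 p.2.1 p.2.2)
      = fun p => fderiv ℝ (fun q : ℝ × ℝ × ℝ => f q.1 q.2.1 q.2.2) p (0, 0, 1) :=
    funext fun p => hf.pdt_eq p.1 p.2.1 p.2.2
  rw [hf.pdx.pdt_eq x y t, hf.pdt.pdx_eq x y t, e1, e2]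
  exact fderiv_swap _ hf _ _ _

lemma pdt_pdy_comm {f : ℝ → ℝ → ℝ → ℝ} (hf : Sm f) : pdt (pdy f) = pdy (pdt f) := by
  funext x y t
  have e1 : (fun p : ℝ × ℝ × ℝ => pdy f p.1 p.2.1 p.2.2)
      = fun p => fderiv ℝ (fun q : ℝ × ℝ × ℝ => f q.1 q.2.1 q.2.2) p (0, 1, 0) :=
    funext fun p => hf.pdy_eq p.1 p.2.1 p.2.2
  have e2 : (fun p : ℝ × ℝ × ℝ => pdt f p.1 p.2.1 p.2.2)
      = fun p => fderiv ℝ (fun q : ℝ × ℝ × ℝ => f q.1 q.2.1 q.2.2) p (0, 0, 1) :=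
    funext fun p => hf.pdt_eq p.1 p.2.1 p.2.2
  rw [hf.pdy.pdt_eq x y t, hf.pdt.pdy_eq x y t, e1, e2]
  exact fderiv_swap _ hf _ _ _

/-- With `u = 2 φ_x / φ`, `h = -2 φ_x φ_y / φ² + 2 φ_xy / φ - 1` and `ψ = φ_t + φ_xx`,
one has `h_t + (u h + u + u_xy)_x
  = (4/φ³) φ_x φ_y ψ - (2/φ²)(φ_x ψ_y + φ_y ψ_x + φ_xy ψ) + (2/φ) ψ_xy`. -/
theorem dlw_identity2_plus (φ u h ψ : ℝ → ℝ → ℝ → ℝ)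
    (hφ : ContDiff ℝ (⊤ : ℕ∞) (fun p : ℝ × ℝ × ℝ => φ p.1 p.2.1 p.2.2))
    (hne : ∀ x y t, φ x y t ≠ 0)
    (hu : u = fun x y t => 2 * pdx φ x y t / φ x y t)
    (hh : h = fun x y t =>
      -2 * pdx φ x y t * pdy φ x y t / (φ x y t) ^ 2
        + 2 * pdy (pdx φ) x y t / φ x y t - 1)
    (hψ : ψ = fun x y t => pdt φ x y t + pdx (pdx φ) x y t) :
    ∀ x y t, pdt h x y t
        + pdx (fun a b c => u a b c * h a b c + u a b c + pdy (pdx u) a b c) x y t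
      = 4 / (φ x y t) ^ 3 * (pdx φ x y t * pdy φ x y t * ψ x y t)
        - 2 / (φ x y t) ^ 2 * (pdx φ x y t * pdy ψ x y t
            + pdy φ x y t * pdx ψ x y t + pdy (pdx φ) x y t * ψ x y t)
        + 2 / φ x y t * pdy (pdx ψ) x y t := by
  have hSφ : Sm φ := hφ
  set A : ℝ → ℝ → ℝ → ℝ := fun x y t => pdx φ x y t / φ x y t with hA
  set B : ℝ → ℝ → ℝ → ℝ := fun x y t => pdt φ x y t / φ x y t with hB
  have hSA : Sm A := by rw [hA]; exact hSφ.pdx.div hSφ hne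
  have hSB : Sm B := by rw [hB]; exact hSφ.pdt.div hSφ hne
  have hSψ : Sm ψ := by rw [hψ]; exact hSφ.pdt.add hSφ.pdx.pdx
  -- first partials of A and B
  have hAy : ∀ x y t, pdy A x y t =
      (pdy (pdx φ) x y t * φ x y t - pdx φ x y t * pdy φ x y t) / φ x y t ^ 2 := by
    intro x y t; rw [hA]
    exact ((hSφ.pdx.hasY x y t).div (hSφ.hasY x y t) (hne x y t)).deriv
  have hAx : ∀ x y t, pdx A x y t =
      (pdx (pdx φ) x y t * φ x y t - pdx φ x y t * pdx φ x y t) / φ x y t ^ 2 := by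
    intro x y t; rw [hA]
    exact ((hSφ.pdx.hasX x y t).div (hSφ.hasX x y t) (hne x y t)).deriv
  have hAt : ∀ x y t, pdt A x y t =
      (pdt (pdx φ) x y t * φ x y t - pdx φ x y t * pdt φ x y t) / φ x y t ^ 2 := by
    intro x y t; rw [hA]
    exact ((hSφ.pdx.hasT x y t).div (hSφ.hasT x y t) (hne x y t)).deriv
  have hBx : ∀ x y t, pdx B x y t =
      (pdx (pdt φ) x y t * φ x y t - pdt φ x y t * pdx φ x y t) / φ x y t ^ 2 := by
    intro x y t; rw [hB]
    exact ((hSφ.pdt.hasX x y t).div (hSφ.hasX x y t) (hne x y t)).deriv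
  have hAtBx : pdt A = pdx B := by
    funext x y t
    rw [hAt, hBx, pdt_pdx_comm hSφ]
    ring
  -- u and h in terms of A
  have hu2 : u = fun x y t => 2 * A x y t := by
    funext x y t
    simp only [hu, hA]
    ring
  have hh2 : h = fun x y t => 2 * pdy A x y t - 1 := by
    funext x y t
    have h0 := hne x y t
    simp only [hh, hAy]
    field_simp
    ring
  have hht : ∀ x y t, pdt h x y t = 2 * pdt (pdy A) x y t := by
    intro x y t; rw [hh2]
    exact (((hSA.pdy.hasT x y t).const_mul 2).sub_const 1).deriv
  have hux : pdx u = fun x y t => 2 * pdx A x y t := by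
    funext x y t; rw [hu2]
    exact ((hSA.hasX x y t).const_mul 2).deriv
  have huxy : ∀ x y t, pdy (pdx u) x y t = 2 * pdy (pdx A) x y t := by
    intro x y t; rw [hux]
    exact ((hSA.pdx.hasY x y t).const_mul 2).deriv
  have hw : (fun a b c => u a b c * h a b c + u a b c + pdy (pdx u) a b c)
      = fun x y t => 4 * (A x y t * pdy A x y t) + 2 * pdy (pdx A) x y t := by
    funext x y t
    rw [huxy x y t]
    simp only [hu2, hh2]
    ring
  have hwx : ∀ x y t,
      pdx (fun a b c => u a b c * h a b c + u a b c + pdy (pdx u) a b c) x y t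
      = 4 * (pdx A x y t * pdy A x y t + A x y t * pdx (pdy A) x y t)
        + 2 * pdx (pdy (pdx A)) x y t := by
    intro x y t; rw [hw]
    exact ((((hSA.hasX x y t).mul (hSA.pdy.hasX x y t)).const_mul 4).add
      ((hSA.pdx.pdy.hasX x y t).const_mul 2)).deriv
  -- C = ψ/φ = B + A_x + A²
  set C : ℝ → ℝ → ℝ → ℝ :=
    fun x y t => B x y t + pdx A x y t + A x y t * A x y t with hC
  have hSC : Sm C := by rw [hC]; exact (hSB.add hSA.pdx).add (hSA.mul hSA)
  have hCψ : C = fun x y t => ψ x y t / φ x y t := by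
    funext x y t
    have h0 := hne x y t
    simp only [hC, hB, hψ, hAx]; simp only [hA]
    field_simp
    ring
  have hCx : pdx C = fun x y t =>
      (pdx ψ x y t * φ x y t - ψ x y t * pdx φ x y t) / φ x y t ^ 2 := by
    funext x y t; rw [hCψ]
    exact ((hSψ.hasX x y t).div (hSφ.hasX x y t) (hne x y t)).deriv
  have hCxy : ∀ x y t, pdy (pdx C) x y t =
      ((pdy (pdx ψ) x y t * φ x y t + pdx ψ x y t * pdy φ x y t
          - (pdy ψ x y t * pdx φ x y t + ψ x y t * pdy (pdx φ) x y t)) * φ x y t ^ 2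
        - (pdx ψ x y t * φ x y t - ψ x y t * pdx φ x y t)
          * (((2 : ℕ) : ℝ) * φ x y t ^ 1 * pdy φ x y t)) / (φ x y t ^ 2) ^ 2 := by
    intro x y t; rw [hCx]
    exact ((((hSψ.pdx.hasY x y t).mul (hSφ.hasY x y t)).sub
      ((hSψ.hasY x y t).mul (hSφ.pdx.hasY x y t))).div
      ((hSφ.hasY x y t).pow 2) (pow_ne_zero 2 (hne x y t))).deriv
  have hCx2 : pdx C = fun x y t => pdx B x y t + pdx (pdx A) x y t
      + (pdx A x y t * A x y t + A x y t * pdx A x y t) := by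
    funext x y t; rw [hC]
    exact (((hSB.hasX x y t).add (hSA.pdx.hasX x y t)).add
      ((hSA.hasX x y t).mul (hSA.hasX x y t))).deriv
  have hCxy2 : ∀ x y t, pdy (pdx C) x y t
      = pdy (pdx B) x y t + pdy (pdx (pdx A)) x y t
        + ((pdy (pdx A) x y t * A x y t + pdx A x y t * pdy A x y t)
          + (pdy A x y t * pdx A x y t + A x y t * pdy (pdx A) x y t)) := by
    intro x y t; rw [hCx2]
    exact (((hSB.pdx.hasY x y t).add (hSA.pdx.pdx.hasY x y t)).add
      (((hSA.pdx.hasY x y t).mul (hSA.hasY x y t)).add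
        ((hSA.hasY x y t).mul (hSA.pdx.hasY x y t)))).deriv
  -- final computation
  intro x y t
  have hRHS : 4 / (φ x y t) ^ 3 * (pdx φ x y t * pdy φ x y t * ψ x y t)
        - 2 / (φ x y t) ^ 2 * (pdx φ x y t * pdy ψ x y t
            + pdy φ x y t * pdx ψ x y t + pdy (pdx φ) x y t * ψ x y t)
        + 2 / φ x y t * pdy (pdx ψ) x y t = 2 * pdy (pdx C) x y t := by
    rw [hCxy x y t]
    have h0 := hne x y t
    push_cast
    field_simp
    ring
  rw [hht x y t, hwx x y t, hRHS, hCxy2 x y t, ← pdx_pdy_comm hSA.pdx,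
    ← pdx_pdy_comm hSA, pdt_pdy_comm hSA, hAtBx]
  ring
end

section
/- Let a, d ∈ ℝ be constants. Then the functions U(z, t) = a·(1 + tanh((1/2)(a·z - a²·t + d))) and H(z, t) = (a²/2)·sech²((1/2)(a·z - a²·t + d)) - 1 satisfy the (1+1)-dimensional dispersive long wave equations: U_t + H_z + (1/2)(U²)_z = 0 and H_t + (U H + U + U_zz)_z = 0. -/
/-!
The tanh method. Along the phase `ξ = a z - a² t + d` put `T = tanh (ξ / 2)`; since
`dT/dξ = (1 - T²) / 2`, the `z`- and `t`-derivatives of a polynomial in `T` are again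
polynomials in `T`. Both `U = a (1 + T)` and `H = (a² / 2) (1 - T²) - 1` are such polynomials,
so each equation of the system becomes a polynomial identity in `T`, which holds for all `a`.
-/

noncomputable def pdz2 (F : ℝ → ℝ → ℝ) : ℝ → ℝ → ℝ :=
  fun z t => deriv (fun z' => F z' t) z

noncomputable def pdt2 (F : ℝ → ℝ → ℝ) : ℝ → ℝ → ℝ :=
  fun z t => deriv (fun t' => F z t') t

open Polynomial Real

theorem Real.hasDerivAt_tanh (x : ℝ) : HasDerivAt tanh (1 - tanh x ^ 2) x := by
  rw [show tanh = sinh / cosh from funext tanh_eq_sinh_div_cosh]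
  refine ((hasDerivAt_sinh x).div (hasDerivAt_cosh x) (cosh_pos x).ne').congr_deriv ?_
  simp only [Pi.div_apply]
  field_simp [(cosh_pos x).ne']

theorem Real.one_div_cosh_sq (x : ℝ) : (1 / cosh x) ^ 2 = 1 - tanh x ^ 2 := by
  rw [tanh_eq_sinh_div_cosh]
  field_simp [(cosh_pos x).ne']
  linarith [cosh_sq_sub_sinh_sq x]

theorem deriv_comp_mul_add (f : ℝ → ℝ) (m b x : ℝ) :
    deriv (fun x => f (m * x + b)) x = m * deriv f (m * x + b) := by
  simpa [deriv_comp_add_const] using deriv_comp_mul_left m (fun y => f (y + b)) x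

section TravellingWave

variable (k c d : ℝ)

theorem pdz2_travellingWave (f : ℝ → ℝ) :
    pdz2 (fun z t => f (k * z - c * t + d)) = fun z t => k * deriv f (k * z - c * t + d) := by
  funext z t
  have hξ (z : ℝ) : k * z - c * t + d = k * z + (d - c * t) := by ring
  simp only [pdz2, hξ, deriv_comp_mul_add]

theorem pdt2_travellingWave (f : ℝ → ℝ) :
    pdt2 (fun z t => f (k * z - c * t + d)) = fun z t => -c * deriv f (k * z - c * t + d) := by
  funext z t
  have hξ (t : ℝ) : k * z - c * t + d = -c * t + (k * z + d) := by ring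
  simp only [pdt2, hξ, deriv_comp_mul_add]

noncomputable def tanhDeriv (p : ℝ[X]) : ℝ[X] := C (1 / 2) * (1 - X ^ 2) * derivative p

theorem hasDerivAt_eval_tanh_half (p : ℝ[X]) (s : ℝ) :
    HasDerivAt (fun s => p.eval (tanh (1 / 2 * s))) ((tanhDeriv p).eval (tanh (1 / 2 * s))) s := by
  refine ((p.hasDerivAt _).comp s
    ((hasDerivAt_tanh _).comp s ((hasDerivAt_id s).const_mul (1 / 2)))).congr_deriv ?_
  simp only [tanhDeriv, eval_mul, eval_C, eval_sub, eval_one, eval_pow, eval_X, id,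
    Function.comp_apply]
  ring

noncomputable def tanhWave (p : ℝ[X]) : ℝ → ℝ → ℝ :=
  fun z t => p.eval (tanh (1 / 2 * (k * z - c * t + d)))

theorem pdz2_tanhWave (p : ℝ[X]) :
    pdz2 (tanhWave k c d p) = tanhWave k c d (C k * tanhDeriv p) := by
  refine (pdz2_travellingWave k c d fun s => p.eval (tanh (1 / 2 * s))).trans
    (funext₂ fun z t => ?_)
  rw [(hasDerivAt_eval_tanh_half p _).deriv]
  simp only [tanhWave, eval_mul, eval_C]

theorem pdt2_tanhWave (p : ℝ[X]) :
    pdt2 (tanhWave k c d p) = tanhWave k c d (-C c * tanhDeriv p) := by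
  refine (pdt2_travellingWave k c d fun s => p.eval (tanh (1 / 2 * s))).trans
    (funext₂ fun z t => ?_)
  rw [(hasDerivAt_eval_tanh_half p _).deriv]
  simp only [tanhWave, eval_mul, eval_neg, eval_C]

variable (z t : ℝ)

theorem tanhWave_add (p q : ℝ[X]) :
    tanhWave k c d (p + q) z t = tanhWave k c d p z t + tanhWave k c d q z t := eval_add

theorem tanhWave_mul (p q : ℝ[X]) :
    tanhWave k c d (p * q) z t = tanhWave k c d p z t * tanhWave k c d q z t := eval_mul

theorem tanhWave_pow (p : ℝ[X]) (n : ℕ) :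
    tanhWave k c d (p ^ n) z t = tanhWave k c d p z t ^ n := eval_pow n

end TravellingWave

/-- For constants `a, d`, the functions
`U = a(1 + tanh((1/2)(az - a²t + d)))` and `H = (a²/2)sech²((1/2)(az - a²t + d)) - 1`
satisfy the (1+1)-dimensional dispersive long wave equations. -/
theorem dlw_1d_solitary_wave (a d : ℝ) (U H : ℝ → ℝ → ℝ)
    (hU : U = fun z t => a * (1 + Real.tanh ((1 / 2) * (a * z - a ^ 2 * t + d))))
    (hH : H = fun z t =>
      a ^ 2 / 2 * (1 / Real.cosh ((1 / 2) * (a * z - a ^ 2 * t + d))) ^ 2 - 1) :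
    (∀ z t, pdt2 U z t + pdz2 H z t
        + (1 / 2) * pdz2 (fun a' b' => (U a' b') ^ 2) z t = 0) ∧
    (∀ z t, pdt2 H z t
        + pdz2 (fun a' b' => U a' b' * H a' b' + U a' b' + pdz2 (pdz2 U) a' b') z t = 0) := by
  obtain rfl : U = tanhWave a (a ^ 2) d (C a * (1 + X)) := by
    rw [hU]; funext z t; simp only [tanhWave, eval_mul, eval_add, eval_C, eval_one, eval_X]
  obtain rfl : H = tanhWave a (a ^ 2) d (C (a ^ 2 / 2) * (1 - X ^ 2) - 1) := by
    rw [hH]; funext z t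
    simp only [tanhWave, eval_sub, eval_mul, eval_C, eval_one, eval_pow, eval_X, one_div_cosh_sq]
  simp only [← tanhWave_pow, ← tanhWave_mul, ← tanhWave_add, pdz2_tanhWave, pdt2_tanhWave]
  constructor <;> intro z t <;>
    simp only [tanhWave, tanhDeriv, derivative_mul, derivative_add, derivative_sub, derivative_C,
      derivative_one, derivative_X, derivative_zero, derivative_pow, eval_mul, eval_add, eval_sub,
      eval_neg, eval_C, eval_one, eval_X, eval_pow, eval_zero] <;>
    ring
end
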